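/- arXiv:2405.07705 — 14 statements merged into one kernel-verified Lean document; each statement's English description precedes it below -/
import Mathlib

section
/- Let (X,d) be a metric space and C a bounded nonempty subset of X. If f : X → ℝ is a strictly positive function, then the f-enlargement B_d(C,f) = ⋃_{x∈C} B_d(x, f(x)) is either a bounded set or equal to all of X. -/
open Metric

namespace Metric

variable {X : Type*} [PseudoMetricSpace X] {C : Set X} {f : X → ℝ}

theorem isBounded_biUnion_ball_of_bddAbove (hC : Bornology.IsBounded C)
    (hf : BddAbove (f '' C)) : Bornology.IsBounded (⋃ x ∈ C, ball x (f x)) := by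
  obtain ⟨M, hM⟩ := hf
  refine (hC.thickening (δ := M)).subset ?_
  rw [thickening_eq_biUnion_ball]
  exact Set.biUnion_mono subset_rfl fun x hx =>
    ball_subset_ball (hM (Set.mem_image_of_mem f hx))

/-- Some `x ∈ C` has `f x > dist y z + diam C` for a fixed `z ∈ C`, and then `y ∈ ball x (f x)`. -/
theorem biUnion_ball_eq_univ_of_not_bddAbove (hC : Bornology.IsBounded C)
    (hf : ¬BddAbove (f '' C)) : ⋃ x ∈ C, ball x (f x) = Set.univ := by
  obtain ⟨z, hz⟩ : C.Nonempty := (nonempty_of_not_bddAbove hf).of_image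
  refine Set.eq_univ_of_forall fun y => Set.mem_iUnion₂.mpr ?_
  obtain ⟨x, hx, hfx⟩ := not_bddAbove_iff.mp hf (dist y z + diam C)
  obtain ⟨x, hxC, rfl⟩ := hx
  refine ⟨x, hxC, mem_ball.mpr ?_⟩
  calc dist y x ≤ dist y z + dist z x := dist_triangle y z x
    _ ≤ dist y z + diam C := by gcongr; exact dist_le_diam_of_mem hC hz hxC
    _ < f x := hfx

end Metric

theorem fEnlargement_of_bounded_bounded_or_univ_general {X : Type*} [MetricSpace X]
    (C : Set X) (hCb : Bornology.IsBounded C)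
    (f : X → ℝ) :
    Bornology.IsBounded (⋃ x ∈ C, ball x (f x)) ∨ (⋃ x ∈ C, ball x (f x)) = Set.univ := by
  by_cases hf : BddAbove (f '' C)
  · exact .inl (isBounded_biUnion_ball_of_bddAbove hCb hf)
  · exact .inr (biUnion_ball_eq_univ_of_not_bddAbove hCb hf)

theorem fEnlargement_of_bounded_bounded_or_univ {X : Type*} [MetricSpace X]
    (C : Set X) (hC : C.Nonempty) (hCb : Bornology.IsBounded C)
    (f : X → ℝ) (hf : ∀ x, 0 < f x) :
    Bornology.IsBounded (⋃ x ∈ C, ball x (f x)) ∨ (⋃ x ∈ C, ball x (f x)) = Set.univ :=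
  fEnlargement_of_bounded_bounded_or_univ_general C hCb f
end

section
/- Let (X,d) be a metric space and S a bornology on X. If a net (A_λ) of nonempty closed subsets converges to a nonempty closed set A in the topology τ⁺_{S,d} (i.e., for every S₀ ∈ S and ε > 0, eventually d(x,A) − d(x,A_λ) < ε for all x ∈ S₀), then (A_λ) converges to A in the upper gap topology G⁺_{S,d} (i.e., for every S₀ ∈ S with D_d(S₀,A) > α, eventually D_d(S₀,A_λ) > α). -/
open Metric Filter

/-! Under a τ⁺-estimate `d(x,A) < d(x,A_λ) + δ` on `S₀`, the gap is the infimum over `S₀` of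
`d(·,A)`, so `D(S₀,A) ≤ D(S₀,A_λ) + δ`; with `δ = (D(S₀,A) - α)/2` this gives `D(S₀,A_λ) > α`. -/

/-- The gap functional `D_d(S,A) = inf {d(s,a) : s ∈ S, a ∈ A}`. -/
noncomputable def gapD {X : Type*} [MetricSpace X] (S A : Set X) : ℝ :=
  sInf (Set.image2 dist S A)

section Gap

variable {X : Type*} [MetricSpace X] {S A A' : Set X}

lemma bddBelow_image2_dist (S A : Set X) : BddBelow (Set.image2 dist S A) :=
  ⟨0, by rintro r ⟨x, -, y, -, rfl⟩; exact dist_nonneg⟩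

lemma gapD_le_infDist {x : X} (hx : x ∈ S) (hA : A.Nonempty) : gapD S A ≤ infDist x A :=
  (le_infDist hA).2 fun _ hy => csInf_le (bddBelow_image2_dist S A) (Set.mem_image2_of_mem hx hy)

lemma le_gapD_of_forall_le_infDist {c : ℝ} (hS : S.Nonempty) (hA : A.Nonempty)
    (h : ∀ x ∈ S, c ≤ infDist x A) : c ≤ gapD S A :=
  le_csInf (hS.image2 hA) <| by
    rintro r ⟨x, hx, y, hy, rfl⟩
    exact (h x hx).trans (infDist_le_dist_of_mem hy)

lemma gapD_le_gapD_add_of_forall_infDist_le {δ : ℝ} (hS : S.Nonempty) (hA : A.Nonempty)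
    (hA' : A'.Nonempty) (h : ∀ x ∈ S, infDist x A ≤ infDist x A' + δ) :
    gapD S A ≤ gapD S A' + δ := by
  have : gapD S A - δ ≤ gapD S A' :=
    le_gapD_of_forall_le_infDist hS hA' fun x hx => by
      linarith [gapD_le_infDist hx hA, h x hx]
  linarith

end Gap

theorem tauPlus_implies_gapPlus_general {X : Type*} [MetricSpace X]
    (B : Set (Set X))
    (hne : ∀ s ∈ B, s.Nonempty)
    {ι : Type*} (l : Filter ι) (An : ι → Set X) (A : Set X)
    (hAnne : ∀ i, (An i).Nonempty)
    (hAne : A.Nonempty)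
    (htau : ∀ S₀ ∈ B, ∀ ε > 0, ∀ᶠ i in l, ∀ x ∈ S₀,
      infDist x A - infDist x (An i) < ε) :
    ∀ S₀ ∈ B, ∀ α : ℝ, α < gapD S₀ A → ∀ᶠ i in l, α < gapD S₀ (An i) := by
  intro S₀ hS₀ α hα
  have hδ : 0 < (gapD S₀ A - α) / 2 := by linarith
  filter_upwards [htau S₀ hS₀ _ hδ] with i hi
  have := gapD_le_gapD_add_of_forall_infDist_le (hne S₀ hS₀) hAne (hAnne i)
    fun x hx => (sub_lt_iff_lt_add'.1 (hi x hx)).le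
  linarith

theorem tauPlus_implies_gapPlus {X : Type*} [MetricSpace X]
    (B : Set (Set X))
    (hne : ∀ s ∈ B, s.Nonempty)
    (hcov : ∀ x : X, ∃ s ∈ B, x ∈ s)
    (hered : ∀ s ∈ B, ∀ t, t ⊆ s → t.Nonempty → t ∈ B)
    (hunion : ∀ s ∈ B, ∀ t ∈ B, s ∪ t ∈ B)
    {ι : Type*} (l : Filter ι) (An : ι → Set X) (A : Set X)
    (hAnc : ∀ i, IsClosed (An i)) (hAnne : ∀ i, (An i).Nonempty)
    (hAc : IsClosed A) (hAne : A.Nonempty)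
    (htau : ∀ S₀ ∈ B, ∀ ε > 0, ∀ᶠ i in l, ∀ x ∈ S₀,
      infDist x A - infDist x (An i) < ε) :
    ∀ S₀ ∈ B, ∀ α : ℝ, α < gapD S₀ A → ∀ᶠ i in l, α < gapD S₀ (An i) :=
  tauPlus_implies_gapPlus_general B hne l An A hAnne hAne htau
end

section
/- Let (X,d) be a metric space and S a bornology on X. If a net (A_λ) of nonempty closed subsets G⁺_{S,d}-converges to a nonempty closed set A, then (A_λ) S⁺-converges to A; that is, for every S₀ ∈ S and ε > 0, eventually A_λ ∩ S₀ ⊆ B_d(A, ε). -/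
open Metric Filter

section Gap

variable {X : Type*} [MetricSpace X] {S A : Set X}

theorem gapD_le_dist {s a : X} (hs : s ∈ S) (ha : a ∈ A) : gapD S A ≤ dist s a :=
  csInf_le ⟨0, by rintro _ ⟨_, _, _, _, rfl⟩; exact dist_nonneg⟩ (Set.mem_image2_of_mem hs ha)

theorem disjoint_of_gapD_pos (h : 0 < gapD S A) : Disjoint S A :=
  Set.disjoint_left.2 fun x hxS hxA => by
    have := gapD_le_dist hxS hxA
    rw [dist_self] at this
    linarith

theorem le_gapD_of_disjoint_thickening {ε : ℝ} (hS : S.Nonempty) (hA : A.Nonempty)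
    (h : Disjoint S (thickening ε A)) : ε ≤ gapD S A := by
  refine le_csInf (hS.image2 hA) ?_
  rintro _ ⟨s, hs, a, ha, rfl⟩
  have hsA : ε ≤ infDist s A :=
    not_lt.1 fun hlt => Set.disjoint_left.1 h hs ((mem_thickening_iff_infDist_lt hA).2 hlt)
  exact hsA.trans (infDist_le_dist_of_mem ha)

end Gap

/-- The points of `S₀` outside `thickening ε A` form a member of `B` at positive gap from `A`;
the gap condition then keeps them off `An i` eventually. -/
theorem gapPlus_implies_bornPlus_general {X : Type*} [MetricSpace X]
    (B : Set (Set X))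
    (hered : ∀ s ∈ B, ∀ t, t ⊆ s → t.Nonempty → t ∈ B)
    {ι : Type*} (l : Filter ι) (An : ι → Set X) (A : Set X)
    (hAne : A.Nonempty)
    (hgap : ∀ S₀ ∈ B, ∀ α : ℝ, α < gapD S₀ A → ∀ᶠ i in l, α < gapD S₀ (An i)) :
    ∀ S₀ ∈ B, ∀ ε > 0, ∀ᶠ i in l, An i ∩ S₀ ⊆ thickening ε A := by
  intro S₀ hS₀ ε hε
  set T := S₀ \ thickening ε A
  rcases T.eq_empty_or_nonempty with hTe | hTne
  · have hS₀A : S₀ ⊆ thickening ε A := Set.sdiff_eq_empty.1 hTe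
    exact Eventually.of_forall fun i x hx => hS₀A hx.2
  · have hTA : 0 < gapD T A :=
      hε.trans_le (le_gapD_of_disjoint_thickening hTne hAne Set.disjoint_sdiff_left)
    filter_upwards [hgap T (hered S₀ hS₀ T Set.sdiff_subset hTne) 0 hTA] with i hi x hx
    by_contra hxA
    exact Set.disjoint_right.1 (disjoint_of_gapD_pos hi) hx.1 ⟨hx.2, hxA⟩

theorem gapPlus_implies_bornPlus {X : Type*} [MetricSpace X]
    (B : Set (Set X))
    (hne : ∀ s ∈ B, s.Nonempty)
    (hcov : ∀ x : X, ∃ s ∈ B, x ∈ s)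
    (hered : ∀ s ∈ B, ∀ t, t ⊆ s → t.Nonempty → t ∈ B)
    (hunion : ∀ s ∈ B, ∀ t ∈ B, s ∪ t ∈ B)
    {ι : Type*} (l : Filter ι) (An : ι → Set X) (A : Set X)
    (hAnc : ∀ i, IsClosed (An i)) (hAnne : ∀ i, (An i).Nonempty)
    (hAc : IsClosed A) (hAne : A.Nonempty)
    (hgap : ∀ S₀ ∈ B, ∀ α : ℝ, α < gapD S₀ A → ∀ᶠ i in l, α < gapD S₀ (An i)) :
    ∀ S₀ ∈ B, ∀ ε > 0, ∀ᶠ i in l, An i ∩ S₀ ⊆ thickening ε A :=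
  gapPlus_implies_bornPlus_general B hered l An A hAne hgap
end

section
/- Let (X,d) be a metric space and S a bornology on X. A net (A_λ) of nonempty closed sets τ⁺_{S,d}-converges to a nonempty closed set A if and only if the following miss condition holds: for every S₀ ∈ S and all positive functions f, g : X → (0,∞) with inf{g(x) − f(x) : x ∈ S₀} > 0, whenever A ∩ B_d(S₀,g) = ∅ then eventually A_λ ∩ B_d(S₀,f) = ∅. -/
/-!
An enlargement `B(S₀, f)` misses a nonempty set `C` exactly when `f ≤ d(·, C)` on `S₀`, so
a uniform gap `δ` between `g` and `f` on `S₀` is exactly what upper convergence with `ε = δ`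
transports from `A` to `A_λ`. Conversely, given `ε`, apply the miss condition to the bornological
set `T = {x ∈ S₀ | ε ≤ d(x, A)}` with `g = d(·, A)` and `f = d(·, A) - ε/2` (both truncated below
by `ε/2` to stay positive); off `T` the required inequality holds for free.
-/

open Metric Filter

/-- The `f`-enlargement of a set `S`: `⋃ x ∈ S, B(x, f x)`. -/
def fEnl {X : Type*} [MetricSpace X] (S : Set X) (f : X → ℝ) : Set X :=
  ⋃ x ∈ S, ball x (f x)

section

variable {X : Type*} [MetricSpace X]

theorem inter_fEnl_eq_empty_iff {S C : Set X} {f : X → ℝ} :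
    C ∩ fEnl S f = ∅ ↔ ∀ x ∈ S, ∀ a ∈ C, f x ≤ dist x a := by
  simp only [Set.eq_empty_iff_forall_notMem, Set.mem_inter_iff, fEnl, Set.mem_iUnion,
    mem_ball', not_and, not_exists, not_lt]
  exact ⟨fun h x hx a ha => h a ha x hx, fun h a ha x hx => h x hx a ha⟩

theorem inter_fEnl_eq_empty_iff_le_infDist {S C : Set X} {f : X → ℝ} (hC : C.Nonempty) :
    C ∩ fEnl S f = ∅ ↔ ∀ x ∈ S, f x ≤ infDist x C := by
  simp only [inter_fEnl_eq_empty_iff, le_infDist hC]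

end

-- A positive `sInf` rules out the junk value `sInf = 0` of a set unbounded below.
theorem Real.sInf_image_le_of_pos {α : Type*} {S : Set α} {F : α → ℝ}
    (hpos : 0 < sInf (F '' S)) {x : α} (hx : x ∈ S) : sInf (F '' S) ≤ F x := by
  refine csInf_le ?_ ⟨x, hx, rfl⟩
  by_contra hbdd
  rw [Real.sInf_of_not_bddBelow hbdd] at hpos
  exact hpos.false

section

variable {X : Type*} [MetricSpace X] {ι : Type*} {l : Filter ι} {An : ι → Set X} {A S : Set X}

theorem eventually_inter_fEnl_eq_empty_of_upper {f g : X → ℝ} (hA : A.Nonempty)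
    (hupper : ∀ ε > 0, ∀ᶠ i in l, ∀ x ∈ S, infDist x A - infDist x (An i) < ε)
    (hgap : 0 < sInf ((fun x => g x - f x) '' S)) (hmiss : A ∩ fEnl S g = ∅) :
    ∀ᶠ i in l, An i ∩ fEnl S f = ∅ := by
  set δ := sInf ((fun x => g x - f x) '' S)
  have hgA := (inter_fEnl_eq_empty_iff_le_infDist hA).1 hmiss
  filter_upwards [hupper δ hgap] with i hi
  refine inter_fEnl_eq_empty_iff.2 fun x hx a ha => le_of_lt ?_
  have hδ : δ ≤ g x - f x := Real.sInf_image_le_of_pos hgap hx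
  calc f x ≤ g x - δ := by linarith
    _ ≤ infDist x A - δ := by linarith [hgA x hx]
    _ < infDist x (An i) := by linarith [hi x hx]
    _ ≤ dist x a := infDist_le_dist_of_mem ha

theorem eventually_infDist_sub_lt_of_miss (hAn : ∀ i, (An i).Nonempty)
    (hmiss : ∀ T ⊆ S, T.Nonempty → ∀ f g : X → ℝ, (∀ x, 0 < f x) → (∀ x, 0 < g x) →
      0 < sInf ((fun x => g x - f x) '' T) → A ∩ fEnl T g = ∅ → ∀ᶠ i in l, An i ∩ fEnl T f = ∅)
    {ε : ℝ} (hε : 0 < ε) :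
    ∀ᶠ i in l, ∀ x ∈ S, infDist x A - infDist x (An i) < ε := by
  set T := {x ∈ S | ε ≤ infDist x A}
  have hoff : ∀ i, ∀ x ∈ S, x ∉ T → infDist x A - infDist x (An i) < ε := by
    intro i x hx hxT
    have : infDist x A < ε := lt_of_not_ge fun h => hxT ⟨hx, h⟩
    linarith [infDist_nonneg (x := x) (s := An i)]
  rcases T.eq_empty_or_nonempty with hT | hT
  · exact .of_forall fun i x hx => hoff i x hx (hT ▸ Set.notMem_empty x)
  set f : X → ℝ := fun x => max (infDist x A - ε / 2) (ε / 2)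
  set g : X → ℝ := fun x => max (infDist x A) (ε / 2)
  have hfT : ∀ x ∈ T, f x = infDist x A - ε / 2 := fun x hx => max_eq_left (by linarith [hx.2])
  have hgT : ∀ x ∈ T, g x = infDist x A := fun x hx => max_eq_left (by linarith [hx.2])
  have hgap : sInf ((fun x => g x - f x) '' T) = ε / 2 := by
    have : (fun x => g x - f x) '' T = (fun _ => ε / 2) '' T :=
      Set.image_congr fun x hx => by rw [hfT x hx, hgT x hx]; ring
    rw [this, hT.image_const, csInf_singleton]
  have hmissA : A ∩ fEnl T g = ∅ :=
    inter_fEnl_eq_empty_iff.2 fun x hx a ha => (hgT x hx).symm ▸ infDist_le_dist_of_mem ha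
  filter_upwards [hmiss T (Set.sep_subset _ _) hT f g
    (fun x => lt_max_of_lt_right (by linarith)) (fun x => lt_max_of_lt_right (by linarith))
    (by rw [hgap]; linarith) hmissA] with i hi x hx
  by_cases hxT : x ∈ T
  · have hfAn := (inter_fEnl_eq_empty_iff_le_infDist (hAn i)).1 hi x hxT
    rw [hfT x hxT] at hfAn
    linarith
  · exact hoff i x hx hxT

end

theorem tauPlus_iff_miss_general {X : Type*} [MetricSpace X]
    (B : Set (Set X))
    (hered : ∀ s ∈ B, ∀ t, t ⊆ s → t.Nonempty → t ∈ B)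
    {ι : Type*} (l : Filter ι) (An : ι → Set X) (A : Set X)
    (hAnne : ∀ i, (An i).Nonempty)
    (hAne : A.Nonempty) :
    (∀ S₀ ∈ B, ∀ ε > 0, ∀ᶠ i in l, ∀ x ∈ S₀,
        infDist x A - infDist x (An i) < ε) ↔
    (∀ S₀ ∈ B, ∀ f g : X → ℝ, (∀ x, 0 < f x) → (∀ x, 0 < g x) →
        0 < sInf ((fun x => g x - f x) '' S₀) →
        A ∩ fEnl S₀ g = ∅ → ∀ᶠ i in l, An i ∩ fEnl S₀ f = ∅) := by
  constructor
  · intro hupper S₀ hS₀ f g _ _ hgap hmiss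
    exact eventually_inter_fEnl_eq_empty_of_upper hAne (hupper S₀ hS₀) hgap hmiss
  · intro hmiss S₀ hS₀ ε hε
    exact eventually_infDist_sub_lt_of_miss hAnne
      (fun T hTS hT => hmiss T (hered S₀ hS₀ T hTS hT)) hε

theorem tauPlus_iff_miss {X : Type*} [MetricSpace X]
    (B : Set (Set X))
    (hne : ∀ s ∈ B, s.Nonempty)
    (hcov : ∀ x : X, ∃ s ∈ B, x ∈ s)
    (hered : ∀ s ∈ B, ∀ t, t ⊆ s → t.Nonempty → t ∈ B)
    (hunion : ∀ s ∈ B, ∀ t ∈ B, s ∪ t ∈ B)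
    {ι : Type*} (l : Filter ι) (An : ι → Set X) (A : Set X)
    (hAnc : ∀ i, IsClosed (An i)) (hAnne : ∀ i, (An i).Nonempty)
    (hAc : IsClosed A) (hAne : A.Nonempty) :
    (∀ S₀ ∈ B, ∀ ε > 0, ∀ᶠ i in l, ∀ x ∈ S₀,
        infDist x A - infDist x (An i) < ε) ↔
    (∀ S₀ ∈ B, ∀ f g : X → ℝ, (∀ x, 0 < f x) → (∀ x, 0 < g x) →
        0 < sInf ((fun x => g x - f x) '' S₀) →
        A ∩ fEnl S₀ g = ∅ → ∀ᶠ i in l, An i ∩ fEnl S₀ f = ∅) :=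
  tauPlus_iff_miss_general B hered l An A hAnne hAne
end

section
/- Let (X,d) be a metric space. A net (A_λ) of nonempty closed subsets converges to a nonempty closed set A in the upper Attouch–Wets topology (τ⁺_{AW_d}, i.e. τ⁺_{S,d} for S the bornology of bounded sets) if and only if: for every bounded set S₀ and all 0 < α < ε, whenever A ∩ B_d(S₀,ε) = ∅, then eventually A_λ ∩ B_d(S₀,α) = ∅. -/
open Metric Filter

/-! `A` misses the `δ`-thickening of `S₀` exactly when `infDist · A ≥ δ` on `S₀`, so both
conditions are statements about the functions `infDist · A` and `infDist · (An i)`. The miss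
condition bounds `infDist · (An i)` from below on each superlevel set of `infDist · A`; as
`infDist · A` is bounded on the bounded set `S₀`, finitely many levels spaced `ε / 2` apart give
`infDist · A - infDist · (An i) < ε` uniformly on `S₀`. -/

theorem Metric.inter_thickening_eq_empty_iff {X : Type*} [PseudoMetricSpace X] {s S : Set X}
    {δ : ℝ} (hs : s.Nonempty) : s ∩ thickening δ S = ∅ ↔ ∀ x ∈ S, δ ≤ infDist x s := by
  simp only [Set.eq_empty_iff_forall_notMem, Set.mem_inter_iff, mem_thickening_iff, ← not_lt,
    infDist_lt_iff hs]
  grind [dist_comm]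

theorem exists_nat_mul_le_lt {t c : ℝ} (hc : 0 < c) (ht : 0 ≤ t) :
    ∃ m : ℕ, m * c ≤ t ∧ t < (m + 1) * c := by
  refine ⟨⌊t / c⌋₊, ?_, ?_⟩
  · rw [← le_div_iff₀ hc]; exact Nat.floor_le (div_nonneg ht hc.le)
  · rw [← div_lt_iff₀ hc]; exact Nat.lt_floor_add_one _

section UniformConvergenceFromBelow

variable {X ι : Type*} {l : Filter ι} {f : X → ℝ} {g : ι → X → ℝ} {S : Set X}

theorem eventually_le_of_forall_sub_lt (h : ∀ ε > 0, ∀ᶠ i in l, ∀ x ∈ S, f x - g i x < ε)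
    {α ε : ℝ} (hαε : α < ε) (hf : ∀ x ∈ S, ε ≤ f x) : ∀ᶠ i in l, ∀ x ∈ S, α ≤ g i x :=
  (h (ε - α) (sub_pos.2 hαε)).mono fun i hi x hx => by linarith [hi x hx, hf x hx]

theorem eventually_sub_lt_of_forall_superlevel (hg : ∀ i x, 0 ≤ g i x) {R : ℝ}
    (hfR : ∀ x ∈ S, f x ≤ R)
    (h : ∀ T ⊆ S, ∀ α ε : ℝ, 0 < α → α < ε → (∀ x ∈ T, ε ≤ f x) →
      ∀ᶠ i in l, ∀ x ∈ T, α ≤ g i x)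
    {ε : ℝ} (hε : 0 < ε) : ∀ᶠ i in l, ∀ x ∈ S, f x - g i x < ε := by
  obtain ⟨c, hc, rfl⟩ : ∃ c, 0 < c ∧ ε = 2 * c := ⟨ε / 2, half_pos hε, by ring⟩
  obtain ⟨N, hN⟩ := exists_nat_gt (R / c)
  rw [div_lt_iff₀ hc] at hN
  have hlevel : ∀ k ∈ Finset.range N, ∀ᶠ i in l,
      ∀ x ∈ {x ∈ S | (k + 2) * c ≤ f x}, (k + 1) * c ≤ g i x := fun k _ =>
    h _ (Set.sep_subset _ _) _ _ (by positivity) (by linarith) fun x hx => hx.2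
  filter_upwards [(Finset.range N).eventually_all.2 hlevel] with i hi x hx
  by_cases hsmall : f x < 2 * c
  · linarith [hg i x]
  obtain ⟨k, hk, hk'⟩ := exists_nat_mul_le_lt hc (sub_nonneg.2 (not_lt.1 hsmall))
  have hkN : k < N := by
    have : ((k : ℝ) + 2) * c < N * c := by linarith [hfR x hx]
    have : (k : ℝ) + 2 < N := lt_of_mul_lt_mul_right this hc.le
    exact_mod_cast (by linarith : (k : ℝ) < N)
  linarith [hi k (Finset.mem_range.2 hkN) x ⟨hx, by linarith⟩]

end UniformConvergenceFromBelow

theorem upperAW_iff_miss_general {X : Type*} [MetricSpace X]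
    {ι : Type*} (l : Filter ι) (An : ι → Set X) (A : Set X)
    (hAnne : ∀ i, (An i).Nonempty)
    (hAne : A.Nonempty) :
    (∀ S₀ : Set X, Bornology.IsBounded S₀ → ∀ ε > 0, ∀ᶠ i in l, ∀ x ∈ S₀,
        infDist x A - infDist x (An i) < ε) ↔
    (∀ S₀ : Set X, Bornology.IsBounded S₀ → ∀ α ε : ℝ, 0 < α → α < ε →
        A ∩ thickening ε S₀ = ∅ → ∀ᶠ i in l, An i ∩ thickening α S₀ = ∅) := by
  simp only [inter_thickening_eq_empty_iff hAne, inter_thickening_eq_empty_iff (hAnne _)]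
  refine ⟨fun h S₀ hS α ε _ hαε hA => eventually_le_of_forall_sub_lt (h S₀ hS) hαε hA,
    fun h S₀ hS ε hε => ?_⟩
  obtain ⟨R, hR⟩ := ((lipschitz_infDist_pt A).isBounded_image hS).bddAbove
  exact eventually_sub_lt_of_forall_superlevel (fun _ _ => infDist_nonneg)
    (fun x hx => hR ⟨x, hx, rfl⟩) (fun T hT => h T (hS.subset hT)) hε

theorem upperAW_iff_miss {X : Type*} [MetricSpace X]
    {ι : Type*} (l : Filter ι) (An : ι → Set X) (A : Set X)
    (hAnc : ∀ i, IsClosed (An i)) (hAnne : ∀ i, (An i).Nonempty)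
    (hAc : IsClosed A) (hAne : A.Nonempty) :
    (∀ S₀ : Set X, Bornology.IsBounded S₀ → ∀ ε > 0, ∀ᶠ i in l, ∀ x ∈ S₀,
        infDist x A - infDist x (An i) < ε) ↔
    (∀ S₀ : Set X, Bornology.IsBounded S₀ → ∀ α ε : ℝ, 0 < α → α < ε →
        A ∩ thickening ε S₀ = ∅ → ∀ᶠ i in l, An i ∩ thickening α S₀ = ∅) :=
  upperAW_iff_miss_general l An A hAnne hAne
end

section
/- Let (X,d) be a metric space. A net (A_λ) of nonempty closed subsets converges to a nonempty closed set A in the upper Wijsman topology (pointwise: for each x ∈ X and ε > 0, eventually d(x,A) − d(x,A_λ) < ε) if and only if: for all x ∈ X and 0 < α < ε, whenever A ∩ B_d(x,ε) = ∅, then eventually A_λ ∩ B_d(x,α) = ∅. -/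
/-!
Both conditions only see the numbers `infDist x A` and `infDist x (An i)`: for a nonempty set `s`,
missing the ball `B(x, r)` means exactly `r ≤ infDist x s`. Upper Wijsman convergence at `x` says
that `infDist x (An i)` eventually exceeds every `α < infDist x A`, and since distances are
nonnegative it suffices to check this for `α > 0`, which is the miss condition.
-/

open Metric Filter

theorem Metric.inter_ball_eq_empty_iff_le_infDist {X : Type*} [PseudoMetricSpace X] {s : Set X}
    (hs : s.Nonempty) {x : X} {r : ℝ} : s ∩ ball x r = ∅ ↔ r ≤ infDist x s := by
  constructor
  · intro hmiss
    by_contra! hlt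
    obtain ⟨y, hy, hxy⟩ := (infDist_lt_iff hs).1 hlt
    exact hmiss.subset ⟨hy, mem_ball'.2 hxy⟩
  · intro hr
    exact Set.disjoint_iff_inter_eq_empty.1
      (disjoint_ball_infDist.mono_left (ball_subset_ball hr)).symm

theorem Filter.forall_eventually_sub_lt_iff_forall_pos_eventually_le {ι : Type*} {l : Filter ι}
    {f : ι → ℝ} (hf : ∀ i, 0 ≤ f i) (a : ℝ) :
    (∀ ε > 0, ∀ᶠ i in l, a - f i < ε) ↔
      ∀ α ε : ℝ, 0 < α → α < ε → ε ≤ a → ∀ᶠ i in l, α ≤ f i := by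
  constructor
  · intro h α ε _ hαε hεa
    filter_upwards [h (ε - α) (by linarith)] with i hi
    linarith
  · intro h ε hε
    rcases le_or_gt (a - ε / 2) 0 with ha | ha
    · exact Eventually.of_forall fun i => by linarith [hf i]
    · filter_upwards [h (a - ε / 2) a ha (by linarith) le_rfl] with i hi
      linarith

theorem upperWijsman_iff_miss_general {X : Type*} [MetricSpace X]
    {ι : Type*} (l : Filter ι) (An : ι → Set X) (A : Set X)
    (hAnne : ∀ i, (An i).Nonempty)
    (hAne : A.Nonempty) :
    (∀ x : X, ∀ ε > 0, ∀ᶠ i in l, infDist x A - infDist x (An i) < ε) ↔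
    (∀ x : X, ∀ α ε : ℝ, 0 < α → α < ε →
        A ∩ ball x ε = ∅ → ∀ᶠ i in l, An i ∩ ball x α = ∅) := by
  simp only [inter_ball_eq_empty_iff_le_infDist, hAne, hAnne]
  exact forall_congr' fun x =>
    forall_eventually_sub_lt_iff_forall_pos_eventually_le (fun i => infDist_nonneg) _

theorem upperWijsman_iff_miss {X : Type*} [MetricSpace X]
    {ι : Type*} (l : Filter ι) (An : ι → Set X) (A : Set X)
    (hAnc : ∀ i, IsClosed (An i)) (hAnne : ∀ i, (An i).Nonempty)
    (hAc : IsClosed A) (hAne : A.Nonempty) :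
    (∀ x : X, ∀ ε > 0, ∀ᶠ i in l, infDist x A - infDist x (An i) < ε) ↔
    (∀ x : X, ∀ α ε : ℝ, 0 < α → α < ε →
        A ∩ ball x ε = ∅ → ∀ᶠ i in l, An i ∩ ball x α = ∅) :=
  upperWijsman_iff_miss_general l An A hAnne hAne
end

section
/- Let (X,d) be a metric space and S a bornology on X. A net (A_λ) of nonempty subsets S⁺-converges to a nonempty set A if and only if: for every S₀ ∈ S and ε > 0, whenever A ∩ B_d(S₀,ε) = ∅, then eventually A_λ ∩ S₀ = ∅. -/
open Metric Filter

theorem inter_thickening_eq_empty_comm {X : Type*} [PseudoMetricSpace X] {ε : ℝ} {s t : Set X} :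
    s ∩ thickening ε t = ∅ ↔ t ∩ thickening ε s = ∅ := by
  suffices key : ∀ s t : Set X, s ∩ thickening ε t = ∅ → t ∩ thickening ε s = ∅ from
    ⟨key s t, key t s⟩
  intro s t h
  refine Set.eq_empty_iff_forall_notMem.mpr fun x ⟨hxt, hxs⟩ => ?_
  obtain ⟨y, hys, hxy⟩ := mem_thickening_iff.mp hxs
  exact h.subset ⟨hys, mem_thickening_iff.mpr ⟨x, hxt, by rwa [dist_comm]⟩⟩

theorem inter_thickening_diff_thickening_eq_empty {X : Type*} [PseudoMetricSpace X] (ε : ℝ)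
    (s t : Set X) : s ∩ thickening ε (t \ thickening ε s) = ∅ :=
  inter_thickening_eq_empty_comm.mpr Set.sdiff_inter_self

theorem bornPlus_iff_miss_general {X : Type*} [MetricSpace X]
    (B : Set (Set X))
    (hered : ∀ s ∈ B, ∀ t, t ⊆ s → t.Nonempty → t ∈ B)
    {ι : Type*} (l : Filter ι) (An : ι → Set X) (A : Set X) :
    (∀ S₀ ∈ B, ∀ ε > 0, ∀ᶠ i in l, An i ∩ S₀ ⊆ thickening ε A) ↔
    (∀ S₀ ∈ B, ∀ ε > 0, A ∩ thickening ε S₀ = ∅ → ∀ᶠ i in l, An i ∩ S₀ = ∅) := by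
  constructor
  · intro h S₀ hS₀ ε hε hmiss
    have hS₀A : S₀ ∩ thickening ε A = ∅ := inter_thickening_eq_empty_comm.mp hmiss
    filter_upwards [h S₀ hS₀ ε hε] with i hi
    exact Set.subset_eq_empty (Set.subset_inter Set.inter_subset_right hi) hS₀A
  · intro h S₀ hS₀ ε hε
    -- The part of `S₀` lying far from `A` is again in `B` (if nonempty) and misses `A` by `ε`.
    set S₁ := S₀ \ thickening ε A
    have hS₁ : ∀ᶠ i in l, An i ∩ S₁ = ∅ := by
      rcases S₁.eq_empty_or_nonempty with hempty | hS₁ne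
      · exact Eventually.of_forall fun i => by rw [hempty, Set.inter_empty]
      · exact h S₁ (hered S₀ hS₀ S₁ Set.sdiff_subset hS₁ne) ε hε
          (inter_thickening_diff_thickening_eq_empty ε A S₀)
    filter_upwards [hS₁] with i hi
    rwa [← Set.inter_sdiff_assoc, Set.sdiff_eq_empty] at hi

theorem bornPlus_iff_miss {X : Type*} [MetricSpace X]
    (B : Set (Set X))
    (hne : ∀ s ∈ B, s.Nonempty)
    (hcov : ∀ x : X, ∃ s ∈ B, x ∈ s)
    (hered : ∀ s ∈ B, ∀ t, t ⊆ s → t.Nonempty → t ∈ B)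
    (hunion : ∀ s ∈ B, ∀ t ∈ B, s ∪ t ∈ B)
    {ι : Type*} (l : Filter ι) (An : ι → Set X) (A : Set X)
    (hAnne : ∀ i, (An i).Nonempty) (hAne : A.Nonempty) :
    (∀ S₀ ∈ B, ∀ ε > 0, ∀ᶠ i in l, An i ∩ S₀ ⊆ thickening ε A) ↔
    (∀ S₀ ∈ B, ∀ ε > 0, A ∩ thickening ε S₀ = ∅ → ∀ᶠ i in l, An i ∩ S₀ = ∅) :=
  bornPlus_iff_miss_general B hered l An A
end

section
/- Let (X,d) be a metric space and S a bornology on X that is stable under small enlargements (for each S₀ ∈ S there is ε > 0 with B_d(S₀,ε) ∈ S). Then every S⁺-convergent net of nonempty sets is μ⁺⁺_S-convergent: if (A_λ) S⁺-converges to A, then for each S₀ ∈ S with D_d(S₀,A) > 0, eventually there is δ > 0 with S₀ ∩ B_d(A_λ,δ) = ∅. -/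
/-!
Take `ε₁ > 0` with `B(S₀, ε₁) ∈ S` and `δ = min ε₁ (ε / 2)`. A point of `S₀` within `δ` of `A_λ`
is within `δ` of a point of `A_λ ∩ B(S₀, ε₁)`; by `S⁺`-convergence tested on the enlargement
`B(S₀, ε₁)`, such points are eventually within `ε / 2` of `A`. So the point would be within
`δ + ε / 2 ≤ ε` of `A`, which `S₀ ∩ B(A, ε) = ∅` forbids.
-/

open Metric Filter

section Thickening

variable {X : Type*} [PseudoEMetricSpace X]

theorem Metric.inter_thickening_subset_thickening_inter (δ : ℝ) (s t : Set X) :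
    s ∩ thickening δ t ⊆ thickening δ (t ∩ thickening δ s) := by
  rintro x ⟨hxs, hxt⟩
  obtain ⟨y, hyt, hxy⟩ := (mem_thickening_iff_exists_edist_lt t x).1 hxt
  have hys : y ∈ thickening δ s :=
    (mem_thickening_iff_exists_edist_lt s y).2 ⟨x, hxs, by rwa [edist_comm]⟩
  exact (mem_thickening_iff_exists_edist_lt _ x).2 ⟨y, ⟨hyt, hys⟩, hxy⟩

theorem Metric.disjoint_thickening_of_inter_thickening_subset {S T A : Set X} {δ η ε : ℝ}
    (hε : δ + η ≤ ε) (hSA : Disjoint S (thickening ε A))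
    (hT : T ∩ thickening δ S ⊆ thickening η A) : Disjoint S (thickening δ T) := by
  refine Set.disjoint_left.2 fun x hxS hxT ↦ Set.disjoint_left.1 hSA hxS ?_
  have hx : x ∈ thickening δ (T ∩ thickening δ S) :=
    inter_thickening_subset_thickening_inter δ S T ⟨hxS, hxT⟩
  exact thickening_mono hε A <| thickening_thickening_subset δ η A <|
    thickening_subset_of_subset δ hT hx

end Thickening

theorem bornPlus_implies_muPlusPlus_of_stable_general {X : Type*} [MetricSpace X]
    (B : Set (Set X))
    (hstable : ∀ S₀ ∈ B, ∃ ε > 0, thickening ε S₀ ∈ B)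
    {ι : Type*} (l : Filter ι) (An : ι → Set X) (A : Set X)
    (hborn : ∀ S₀ ∈ B, ∀ ε > 0, ∀ᶠ i in l, An i ∩ S₀ ⊆ thickening ε A) :
    ∀ S₀ ∈ B, (∃ ε > 0, S₀ ∩ thickening ε A = ∅) →
      ∀ᶠ i in l, ∃ δ > 0, S₀ ∩ thickening δ (An i) = ∅ := by
  rintro S₀ hS₀ ⟨ε, hε, hdisj⟩
  obtain ⟨ε₁, hε₁, hthick⟩ := hstable S₀ hS₀
  filter_upwards [hborn _ hthick (ε / 2) (half_pos hε)] with i hi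
  set δ := min ε₁ (ε / 2)
  have hnear : An i ∩ thickening δ S₀ ⊆ thickening (ε / 2) A :=
    (Set.inter_subset_inter_right _ (thickening_mono (min_le_left _ _) S₀)).trans hi
  refine ⟨δ, lt_min hε₁ (half_pos hε), Set.disjoint_iff_inter_eq_empty.1 ?_⟩
  exact disjoint_thickening_of_inter_thickening_subset (by linarith [min_le_right ε₁ (ε / 2)])
    (Set.disjoint_iff_inter_eq_empty.2 hdisj) hnear

theorem bornPlus_implies_muPlusPlus_of_stable {X : Type*} [MetricSpace X]
    (B : Set (Set X))
    (hne : ∀ s ∈ B, s.Nonempty)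
    (hcov : ∀ x : X, ∃ s ∈ B, x ∈ s)
    (hered : ∀ s ∈ B, ∀ t, t ⊆ s → t.Nonempty → t ∈ B)
    (hunion : ∀ s ∈ B, ∀ t ∈ B, s ∪ t ∈ B)
    (hstable : ∀ S₀ ∈ B, ∃ ε > 0, thickening ε S₀ ∈ B)
    {ι : Type*} (l : Filter ι) (An : ι → Set X) (A : Set X)
    (hAnne : ∀ i, (An i).Nonempty) (hAne : A.Nonempty)
    (hborn : ∀ S₀ ∈ B, ∀ ε > 0, ∀ᶠ i in l, An i ∩ S₀ ⊆ thickening ε A) :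
    ∀ S₀ ∈ B, (∃ ε > 0, S₀ ∩ thickening ε A = ∅) →
      ∀ᶠ i in l, ∃ δ > 0, S₀ ∩ thickening δ (An i) = ∅ :=
  bornPlus_implies_muPlusPlus_of_stable_general B hstable l An A hborn
end

section
/- Let (X,d) be a metric space and S a bornology on X such that for every S₀ ∈ S and all positive functions f, g : X → (0,∞) with inf{g(x) − f(x) : x ∈ S₀} > 0, either B_d(S₀,f) ∈ S or B_d(S₀,g) = X. Then every S⁺-convergent net of nonempty closed sets is τ⁺_{S,d}-convergent to the same limit. -/
/-!
Fix `S₀ ∈ S` and `ε > 0`, and let `S₁ = {x ∈ S₀ | ε ≤ d(x, A)}`; off `S₁` the required inequality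
is trivial. With `f = max (d(·, A) - ε/2) (ε/2)` we have `g = f + ε/4 < d(·, A)` on `S₁`, so no point
of `A` lies in `B_d(S₁, g)`; the condition on `S` therefore puts `B_d(S₁, f)` in `S`. By
`S⁺`-convergence, eventually every point of `A_λ` within `f x` of some `x ∈ S₁` lies within `ε/2`
of `A`, which forces `d(x, A_λ) ≥ f x = d(x, A) - ε/2`.
-/

open Metric Filter

section fEnl

variable {X : Type*} [MetricSpace X] {S A C : Set X} {f g : X → ℝ} {δ : ℝ}

theorem disjoint_fEnl_of_le_infDist (hg : ∀ y ∈ S, g y ≤ infDist y A) :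
    Disjoint A (fEnl S g) := by
  refine Set.disjoint_left.2 fun a ha haS => ?_
  obtain ⟨y, hy, hay⟩ := Set.mem_iUnion₂.1 haS
  have : dist y a < infDist y A := (dist_comm y a ▸ mem_ball.1 hay).trans_le (hg y hy)
  exact (infDist_le_dist_of_mem ha).not_gt this

theorem le_infDist_of_inter_fEnl_subset_thickening (hC : C.Nonempty)
    (hsub : C ∩ fEnl S f ⊆ thickening δ A) {x : X} (hx : x ∈ S)
    (hfx : f x + δ ≤ infDist x A) : f x ≤ infDist x C := by
  by_contra! hlt
  obtain ⟨c, hc, hxc⟩ := (infDist_lt_iff hC).1 hlt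
  have hcS : c ∈ fEnl S f := Set.mem_biUnion hx (mem_ball'.2 hxc)
  obtain ⟨a, ha, hca⟩ := mem_thickening_iff.1 (hsub ⟨hc, hcS⟩)
  have : infDist x A < f x + δ := calc
    infDist x A ≤ dist x a := infDist_le_dist_of_mem ha
    _ ≤ dist x c + dist c a := dist_triangle x c a
    _ < f x + δ := add_lt_add hxc hca
  linarith

theorem fEnl_mem_of_fEnl_add_ne_univ {B : Set (Set X)}
    (hcond : ∀ S₀ ∈ B, ∀ f g : X → ℝ, (∀ x, 0 < f x) → (∀ x, 0 < g x) →
      0 < sInf ((fun x => g x - f x) '' S₀) →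
      fEnl S₀ f ∈ B ∨ fEnl S₀ g = Set.univ)
    (hSB : S ∈ B) (hS : S.Nonempty) (hf : ∀ x, 0 < f x) (hδ : 0 < δ)
    (hne : fEnl S (fun x => f x + δ) ≠ Set.univ) : fEnl S f ∈ B := by
  have hgap : (fun x => (f x + δ) - f x) '' S = {δ} := by
    simpa only [add_sub_cancel_left] using hS.image_const δ
  refine (hcond S hSB f _ hf (fun x => add_pos (hf x) hδ) ?_).resolve_right hne
  rwa [hgap, csInf_singleton]

end fEnl

theorem bornPlus_implies_tauPlus_of_condition_general {X : Type*} [MetricSpace X]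
    (B : Set (Set X))
    (hered : ∀ s ∈ B, ∀ t, t ⊆ s → t.Nonempty → t ∈ B)
    (hcond : ∀ S₀ ∈ B, ∀ f g : X → ℝ, (∀ x, 0 < f x) → (∀ x, 0 < g x) →
      0 < sInf ((fun x => g x - f x) '' S₀) →
      fEnl S₀ f ∈ B ∨ fEnl S₀ g = Set.univ)
    {ι : Type*} (l : Filter ι) (An : ι → Set X) (A : Set X)
    (hAnne : ∀ i, (An i).Nonempty)
    (hAne : A.Nonempty)
    (hborn : ∀ S₀ ∈ B, ∀ ε > 0, ∀ᶠ i in l, An i ∩ S₀ ⊆ thickening ε A) :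
    ∀ S₀ ∈ B, ∀ ε > 0, ∀ᶠ i in l, ∀ x ∈ S₀,
      infDist x A - infDist x (An i) < ε := by
  intro S₀ hS₀ ε hε
  set S₁ : Set X := {x ∈ S₀ | ε ≤ infDist x A}
  set f : X → ℝ := fun x => max (infDist x A - ε / 2) (ε / 2)
  have hf : ∀ y ∈ S₁, f y = infDist y A - ε / 2 := fun y hy => max_eq_left (by linarith [hy.2])
  have hnear : ∀ᶠ i in l, An i ∩ fEnl S₁ f ⊆ thickening (ε / 2) A := by
    rcases S₁.eq_empty_or_nonempty with hS₁ | hS₁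
    · simp [fEnl, hS₁]
    have hfar : Disjoint A (fEnl S₁ fun x => f x + ε / 4) :=
      disjoint_fEnl_of_le_infDist fun y hy => by linarith [hf y hy]
    have hfB : fEnl S₁ f ∈ B :=
      fEnl_mem_of_fEnl_add_ne_univ hcond (hered S₀ hS₀ S₁ (fun x hx => hx.1) hS₁)
        hS₁ (fun x => lt_max_of_lt_right (half_pos hε)) (by positivity)
        fun h => hAne.ne_empty (Set.disjoint_univ.1 (h ▸ hfar))
    exact hborn _ hfB _ (half_pos hε)
  filter_upwards [hnear] with i hi x hx
  have hCx := infDist_nonneg (x := x) (s := An i)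
  by_cases hxA : ε ≤ infDist x A
  · have := le_infDist_of_inter_fEnl_subset_thickening (hAnne i) hi ⟨hx, hxA⟩
      (by linarith [hf x ⟨hx, hxA⟩])
    linarith [hf x ⟨hx, hxA⟩]
  · linarith

theorem bornPlus_implies_tauPlus_of_condition {X : Type*} [MetricSpace X]
    (B : Set (Set X))
    (hne : ∀ s ∈ B, s.Nonempty)
    (hcov : ∀ x : X, ∃ s ∈ B, x ∈ s)
    (hered : ∀ s ∈ B, ∀ t, t ⊆ s → t.Nonempty → t ∈ B)
    (hunion : ∀ s ∈ B, ∀ t ∈ B, s ∪ t ∈ B)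
    (hcond : ∀ S₀ ∈ B, ∀ f g : X → ℝ, (∀ x, 0 < f x) → (∀ x, 0 < g x) →
      0 < sInf ((fun x => g x - f x) '' S₀) →
      fEnl S₀ f ∈ B ∨ fEnl S₀ g = Set.univ)
    {ι : Type*} (l : Filter ι) (An : ι → Set X) (A : Set X)
    (hAnc : ∀ i, IsClosed (An i)) (hAnne : ∀ i, (An i).Nonempty)
    (hAc : IsClosed A) (hAne : A.Nonempty)
    (hborn : ∀ S₀ ∈ B, ∀ ε > 0, ∀ᶠ i in l, An i ∩ S₀ ⊆ thickening ε A) :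
    ∀ S₀ ∈ B, ∀ ε > 0, ∀ᶠ i in l, ∀ x ∈ S₀,
      infDist x A - infDist x (An i) < ε :=
  bornPlus_implies_tauPlus_of_condition_general B hered hcond l An A hAnne hAne hborn
end

section
/- Let (X,d) be an unbounded metric space and S a bornology on X such that τ⁺_{S,d}-convergence coincides with S⁺-convergence on nonempty closed sets. Then S is stable under enlargements: for every S₀ ∈ S and r > 0, B_d(S₀,r) ∈ S (where, if X itself arises as such an enlargement, note X ∈ S since then S = P₀(X)). -/
/-!
If some point `y` lies outside `B_d(S₀, r + 1)`, the dichotomy applied to the constant radii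
`r < r + 1` rules out the second alternative, so `B_d(S₀, r) ∈ S`. Otherwise `S₀` is
`(r + 1)`-dense in `X`. Then for every `y` the dichotomy applied to the points of `S₀` at
distance `≥ 1` from `y`, with the radii `d(x, y) / 2 + 1/4 < d(x, y) / 2 + 1/2`, shows that
everything far enough from `y` is in `S`; two such far regions around far-apart points cover `X`,
so `X ∈ S`.
-/

open Metric Filter

open Set

section

variable {X : Type*} [MetricSpace X]

lemma mem_fEnl {S : Set X} {f : X → ℝ} {z : X} : z ∈ fEnl S f ↔ ∃ x ∈ S, dist z x < f x := by
  simp [fEnl, mem_iUnion, mem_ball]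

lemma fEnl_const (S : Set X) (r : ℝ) : fEnl S (fun _ => r) = thickening r S := by
  rw [thickening_eq_biUnion_ball]
  rfl

lemma exists_lt_dist_of_not_isBounded_univ (hunb : ¬ Bornology.IsBounded (univ : Set X))
    (y : X) (R : ℝ) : ∃ z : X, R < dist z y := by
  by_contra! h
  exact hunb ((isBounded_closedBall (x := y) (r := R)).subset fun z _ => h z)

lemma nonempty_of_not_isBounded_univ (hunb : ¬ Bornology.IsBounded (univ : Set X)) :
    Nonempty X := by
  by_contra h
  exact hunb (by simp [univ_eq_empty_iff.2 (not_nonempty_iff.1 h)])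

def EnlargementDichotomy (B : Set (Set X)) : Prop :=
  ∀ S₀ ∈ B, ∀ f g : X → ℝ, (∀ x, 0 < f x) → (∀ x, 0 < g x) →
    0 < sInf ((fun x => g x - f x) '' S₀) → fEnl S₀ f ∈ B ∨ fEnl S₀ g = univ

namespace EnlargementDichotomy

variable {B : Set (Set X)}

lemma fEnl_mem (hcoin : EnlargementDichotomy B) {S : Set X} (hS : S ∈ B) (hSne : S.Nonempty)
    {f : X → ℝ} (hf : ∀ x, 0 < f x) {c : ℝ} (hc : 0 < c) {y : X}
    (hy : y ∉ fEnl S (fun x => f x + c)) : fEnl S f ∈ B := by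
  have hgap : 0 < sInf ((fun x => (f x + c) - f x) '' S) := by
    simpa only [add_sub_cancel_left, hSne.image_const, csInf_singleton] using hc
  refine (hcoin S hS f _ hf (fun x => add_pos (hf x) hc) hgap).resolve_right fun huniv => ?_
  exact hy (huniv ▸ mem_univ y)

lemma setOf_lt_dist_mem (hcoin : EnlargementDichotomy B)
    (hunb : ¬ Bornology.IsBounded (univ : Set X))
    (hered : ∀ s ∈ B, ∀ t, t ⊆ s → t.Nonempty → t ∈ B) {S : Set X} (hS : S ∈ B) {ρ : ℝ}
    (hdense : ∀ z, ∃ x ∈ S, dist z x < ρ) (y : X) : {z | 3 * ρ + 1 < dist z y} ∈ B := by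
  set T := {x ∈ S | 1 ≤ dist x y}
  have hnear : ∀ z, 3 * ρ + 1 < dist z y → ∃ x ∈ T, dist z x < dist x y / 2 + 1 / 4 := by
    intro z hz
    obtain ⟨x, hxS, hzx⟩ := hdense z
    have := dist_triangle z x y
    have := dist_nonneg (x := z) (y := x)
    exact ⟨x, ⟨hxS, by linarith⟩, by linarith⟩
  obtain ⟨z, hz⟩ := exists_lt_dist_of_not_isBounded_univ hunb y (3 * ρ + 1)
  obtain ⟨x₀, hx₀, -⟩ := hnear z hz
  have hTne : T.Nonempty := ⟨x₀, hx₀⟩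
  -- `y` is never reached: a point of `T` is at distance `d ≥ 1` from `y`, and `d / 2 + 1/2 ≤ d`.
  have hyT : y ∉ fEnl T (fun x => (dist x y / 2 + 1 / 4) + 1 / 4) := by
    rintro hy
    obtain ⟨x, ⟨-, hx⟩, hyx⟩ := mem_fEnl.1 hy
    rw [dist_comm] at hyx
    linarith
  have hTf : fEnl T (fun x => dist x y / 2 + 1 / 4) ∈ B :=
    hcoin.fEnl_mem (hered S hS T (sep_subset _ _) hTne) hTne (fun _ => by positivity)
      (by norm_num) hyT
  exact hered _ hTf _ (fun z hz => mem_fEnl.2 (hnear z hz)) ⟨z, hz⟩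

lemma univ_mem (hcoin : EnlargementDichotomy B) (hunb : ¬ Bornology.IsBounded (univ : Set X))
    (hered : ∀ s ∈ B, ∀ t, t ⊆ s → t.Nonempty → t ∈ B) (hunion : ∀ s ∈ B, ∀ t ∈ B, s ∪ t ∈ B)
    {S : Set X} (hS : S ∈ B) {ρ : ℝ} (hdense : ∀ z, ∃ x ∈ S, dist z x < ρ) : univ ∈ B := by
  obtain ⟨y₁⟩ := nonempty_of_not_isBounded_univ hunb
  obtain ⟨y₂, hy₂⟩ := exists_lt_dist_of_not_isBounded_univ hunb y₁ (2 * (3 * ρ + 1))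
  have hcover : {z | 3 * ρ + 1 < dist z y₁} ∪ {z | 3 * ρ + 1 < dist z y₂} = univ := by
    refine eq_univ_of_forall fun w => ?_
    by_contra! h
    simp only [mem_union, mem_ofPred_eq, not_or, not_lt] at h
    linarith [dist_triangle_left y₂ y₁ w]
  exact hcover ▸ hunion _ (hcoin.setOf_lt_dist_mem hunb hered hS hdense y₁) _
    (hcoin.setOf_lt_dist_mem hunb hered hS hdense y₂)

end EnlargementDichotomy

end

theorem stable_under_enlargements_of_coincidence_general {X : Type*} [MetricSpace X]
    (hunb : ¬ Bornology.IsBounded (Set.univ : Set X))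
    (B : Set (Set X))
    (hne : ∀ s ∈ B, s.Nonempty)
    (hered : ∀ s ∈ B, ∀ t, t ⊆ s → t.Nonempty → t ∈ B)
    (hunion : ∀ s ∈ B, ∀ t ∈ B, s ∪ t ∈ B)
    -- the consequence of the coincidence `τ⁺_{S,d} = S⁺` (Theorem):
    (hcoin : ∀ S₀ ∈ B, ∀ f g : X → ℝ, (∀ x, 0 < f x) → (∀ x, 0 < g x) →
      0 < sInf ((fun x => g x - f x) '' S₀) →
      fEnl S₀ f ∈ B ∨ fEnl S₀ g = Set.univ) :
    ∀ S₀ ∈ B, ∀ r > 0, thickening r S₀ ∈ B := by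
  have hcoin : EnlargementDichotomy B := hcoin
  intro S₀ hS₀ r hr
  by_cases hfar : ∃ y, y ∉ thickening (r + 1) S₀
  · obtain ⟨y, hy⟩ := hfar
    rw [← fEnl_const] at hy ⊢
    exact hcoin.fEnl_mem hS₀ (hne S₀ hS₀) (fun _ => hr) one_pos hy
  · push Not at hfar
    have hdense : ∀ z, ∃ x ∈ S₀, dist z x < r + 1 := fun z => mem_thickening_iff.1 (hfar z)
    exact hered _ (hcoin.univ_mem hunb hered hunion hS₀ hdense) _ (subset_univ _)
      ((hne S₀ hS₀).mono (self_subset_thickening hr S₀))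

theorem stable_under_enlargements_of_coincidence {X : Type*} [MetricSpace X]
    (hunb : ¬ Bornology.IsBounded (Set.univ : Set X))
    (B : Set (Set X))
    (hne : ∀ s ∈ B, s.Nonempty)
    (hcov : ∀ x : X, ∃ s ∈ B, x ∈ s)
    (hered : ∀ s ∈ B, ∀ t, t ⊆ s → t.Nonempty → t ∈ B)
    (hunion : ∀ s ∈ B, ∀ t ∈ B, s ∪ t ∈ B)
    -- the consequence of the coincidence `τ⁺_{S,d} = S⁺` (Theorem):
    (hcoin : ∀ S₀ ∈ B, ∀ f g : X → ℝ, (∀ x, 0 < f x) → (∀ x, 0 < g x) →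
      0 < sInf ((fun x => g x - f x) '' S₀) →
      fEnl S₀ f ∈ B ∨ fEnl S₀ g = Set.univ) :
    ∀ S₀ ∈ B, ∀ r > 0, thickening r S₀ ∈ B :=
  stable_under_enlargements_of_coincidence_general hunb B hne hered hunion hcoin
end

section
/- Let (X,d) be a metric space and S a bornology on X with every member of S totally bounded (S ⊆ TB_d(X)). Then τ⁺_{S,d}-convergence coincides with upper Wijsman convergence on nonempty closed sets: a net (A_λ) satisfies, for each S₀ ∈ S and ε > 0, eventually sup_{x∈S₀}(d(x,A) − d(x,A_λ)) < ε, if and only if for each x ∈ X and ε > 0, eventually d(x,A) − d(x,A_λ) < ε. -/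
open Metric Filter
open scoped NNReal

/- The functions `x ↦ d(x, A) - d(x, Aᵢ)` are uniformly 2-Lipschitz, so an eventual upper bound at
the finitely many points of a δ-net of a totally bounded set spreads, up to `2δ`, over the whole set.
Conversely, singletons belong to the bornology. -/

theorem TotallyBounded.eventually_forall_lt_of_lipschitzWith {X ι : Type*} [PseudoMetricSpace X]
    {l : Filter ι} {g : ι → X → ℝ} {K : ℝ≥0} (hg : ∀ i, LipschitzWith K (g i)) {s : Set X}
    (hs : TotallyBounded s) (h : ∀ x ∈ s, ∀ ε > 0, ∀ᶠ i in l, g i x < ε) {ε : ℝ} (hε : 0 < ε) :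
    ∀ᶠ i in l, ∀ x ∈ s, g i x < ε := by
  set δ := ε / 2 / (K + 1) with hδ
  have hδ_pos : 0 < δ := by positivity
  have hKδ : K * δ ≤ ε / 2 := by
    rw [hδ, mul_div_assoc', div_le_iff₀ (by positivity)]
    nlinarith
  obtain ⟨t, hts, ht, hst⟩ := finite_approx_of_totallyBounded hs δ hδ_pos
  have hnet : ∀ᶠ i in l, ∀ y ∈ t, g i y < ε / 2 :=
    (eventually_all_finite ht).2 fun y hy => h y (hts hy) _ (half_pos hε)
  filter_upwards [hnet] with i hi x hx
  obtain ⟨y, hyt, hxy⟩ := Set.mem_iUnion₂.1 (hst hx)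
  calc g i x ≤ g i y + K * dist x y := (hg i).le_add_mul x y
    _ ≤ g i y + K * δ := by gcongr; exact (mem_ball.1 hxy).le
    _ < ε := by linarith [hi y hyt]

theorem lipschitzWith_infDist_sub_infDist {X : Type*} [PseudoMetricSpace X] (s t : Set X) :
    LipschitzWith 2 fun x => infDist x s - infDist x t := by
  simpa [one_add_one_eq_two] using lipschitz_infDist_pt s |>.sub (lipschitz_infDist_pt t)

theorem tauPlus_eq_upperWijsman_of_totallyBounded_general {X : Type*} [MetricSpace X]
    (B : Set (Set X))
    (hcov : ∀ x : X, ∃ s ∈ B, x ∈ s)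
    (hered : ∀ s ∈ B, ∀ t, t ⊆ s → t.Nonempty → t ∈ B)
    (htb : ∀ s ∈ B, TotallyBounded s)
    {ι : Type*} (l : Filter ι) (An : ι → Set X) (A : Set X) :
    (∀ S₀ ∈ B, ∀ ε > 0, ∀ᶠ i in l, ∀ x ∈ S₀,
        infDist x A - infDist x (An i) < ε) ↔
    (∀ x : X, ∀ ε > 0, ∀ᶠ i in l, infDist x A - infDist x (An i) < ε) := by
  constructor
  · intro h x ε hε
    obtain ⟨s, hs, hxs⟩ := hcov x
    have hx : {x} ∈ B := hered s hs {x} (Set.singleton_subset_iff.2 hxs) (Set.singleton_nonempty x)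
    filter_upwards [h {x} hx ε hε] with i hi using hi x rfl
  · intro h S₀ hS₀ ε hε
    exact (htb S₀ hS₀).eventually_forall_lt_of_lipschitzWith
      (fun i => lipschitzWith_infDist_sub_infDist A (An i)) (fun x _ => h x) hε

theorem tauPlus_eq_upperWijsman_of_totallyBounded {X : Type*} [MetricSpace X]
    (B : Set (Set X))
    (hne : ∀ s ∈ B, s.Nonempty)
    (hcov : ∀ x : X, ∃ s ∈ B, x ∈ s)
    (hered : ∀ s ∈ B, ∀ t, t ⊆ s → t.Nonempty → t ∈ B)
    (hunion : ∀ s ∈ B, ∀ t ∈ B, s ∪ t ∈ B)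
    (htb : ∀ s ∈ B, TotallyBounded s)
    {ι : Type*} (l : Filter ι) (An : ι → Set X) (A : Set X)
    (hAnc : ∀ i, IsClosed (An i)) (hAnne : ∀ i, (An i).Nonempty)
    (hAc : IsClosed A) (hAne : A.Nonempty) :
    (∀ S₀ ∈ B, ∀ ε > 0, ∀ᶠ i in l, ∀ x ∈ S₀,
        infDist x A - infDist x (An i) < ε) ↔
    (∀ x : X, ∀ ε > 0, ∀ᶠ i in l, infDist x A - infDist x (An i) < ε) :=
  tauPlus_eq_upperWijsman_of_totallyBounded_general B hcov hered htb l An A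
end

section
/- Let (X,d) be a metric space. Then K(X)⁺-convergence (upper bornological convergence with respect to the bornology of nonempty relatively compact sets) implies upper Wijsman convergence on nonempty closed sets if and only if (X,d) has nice closed balls, i.e., every closed ball that is a proper subset of X is compact. -/
/-!
If proper closed balls are compact and `x` lies at distance `d` from `A`, the closed ball of radius
`d - ε/2` about `x` is compact, so eventually its trace on `Aᵢ` lies near `A`; points of `Aᵢ` close
to `x` are then almost as far from `x` as `A` is, and `d(x, Aᵢ) ≥ d - ε`.

Conversely, a non-compact proper ball `closedBall x r` carries a sequence `uₙ` tending to infinity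
(leaving every compact set). With `p` outside the ball, the closed sets `{p} ∪ {uₖ | k ≥ n}` converge
to `{p}` on every compact set, yet their distance from `x` stays `≤ r < d(x, p)`.
-/

open Metric Filter Set Topology

section Convergence

variable {X ι : Type*} [PseudoMetricSpace X]

def TendstoUpperCompactBornology (l : Filter ι) (An : ι → Set X) (A : Set X) : Prop :=
  ∀ S₀ : Set X, S₀.Nonempty → IsCompact (closure S₀) →
    ∀ ε > 0, ∀ᶠ i in l, An i ∩ S₀ ⊆ thickening ε A

def TendstoUpperWijsman (l : Filter ι) (An : ι → Set X) (A : Set X) : Prop :=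
  ∀ x : X, ∀ ε > 0, ∀ᶠ i in l, infDist x A - infDist x (An i) < ε

variable (X) in
def HasNiceClosedBalls : Prop :=
  ∀ (x : X) (r : ℝ), closedBall x r ≠ univ → IsCompact (closedBall x r)

theorem min_le_infDist_of_inter_closedBall_subset_thickening {A B : Set X} {x : X} {r δ : ℝ}
    (hB : B.Nonempty) (h : B ∩ closedBall x r ⊆ thickening δ A) :
    min r (infDist x A - δ) ≤ infDist x B := by
  refine (le_infDist hB).2 fun y hy => ?_
  by_cases hyr : dist y x ≤ r
  · obtain ⟨a, ha, hya⟩ := mem_thickening_iff.1 (h ⟨hy, hyr⟩)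
    calc min r (infDist x A - δ) ≤ infDist x A - δ := min_le_right _ _
      _ ≤ dist x y := by linarith [infDist_le_dist_of_mem ha (x := x), dist_triangle x y a]
  · exact (min_le_left _ _).trans (by rw [dist_comm]; linarith)

theorem closedBall_ne_univ_of_lt_infDist {A : Set X} (hA : A.Nonempty) {x : X} {r : ℝ}
    (hr : r < infDist x A) : closedBall x r ≠ univ := by
  obtain ⟨a, ha⟩ := hA
  intro huniv
  have hax : a ∈ closedBall x r := huniv ▸ mem_univ a
  linarith [infDist_le_dist_of_mem ha (x := x), dist_comm a x, mem_closedBall.1 hax]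

theorem HasNiceClosedBalls.tendstoUpperWijsman (hX : HasNiceClosedBalls X) {l : Filter ι}
    {An : ι → Set X} {A : Set X} (hAn : ∀ i, (An i).Nonempty) (hA : A.Nonempty)
    (hK : TendstoUpperCompactBornology l An A) : TendstoUpperWijsman l An A := by
  intro x ε hε
  set r := infDist x A - ε / 2 with hr
  have hS : IsCompact (insert x (closedBall x r)) :=
    (hX x r (closedBall_ne_univ_of_lt_infDist hA (by linarith))).insert x
  filter_upwards [hK _ (insert_nonempty _ _) hS.closure (ε / 4) (by linarith)] with i hi
  have := min_le_infDist_of_inter_closedBall_subset_thickening (hAn i)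
    ((inter_subset_inter_right _ (subset_insert _ _)).trans hi)
  linarith [le_min (le_refl r) (by linarith : r ≤ infDist x A - ε / 4)]

end Convergence

section CocompactSequence

theorem exists_seq_mem_tendsto_cocompact_of_not_isCompact {X : Type*} [TopologicalSpace X]
    [TopologicalSpace.PseudoMetrizableSpace X] {s : Set X} (hs : IsClosed s) (hsc : ¬IsCompact s) :
    ∃ u : ℕ → X, (∀ n, u n ∈ s) ∧ Tendsto u atTop (cocompact X) := by
  have hnsc : ¬IsSeqCompact s := fun h => hsc h.isCompact
  simp only [IsSeqCompact, not_forall, not_exists, not_and, exists_prop] at hnsc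
  obtain ⟨u, hus, hu⟩ := hnsc
  refine ⟨u, hus, hasBasis_cocompact.tendsto_right_iff.2 fun K hK => ?_⟩
  refine not_frequently.1 fun hfreq => ?_
  obtain ⟨a, -, φ, hφ, hlim⟩ := hK.tendsto_subseq' hfreq
  exact hu a (hs.mem_of_tendsto hlim (Eventually.of_forall fun n => hus _)) φ hφ hlim

variable {X : Type*} [TopologicalSpace X] {u : ℕ → X}

theorem isClosed_image_of_tendsto_cocompact [T2Space X] [CompactlyCoherentSpace X]
    (hu : Tendsto u atTop (cocompact X)) (t : Set ℕ) : IsClosed (u '' t) :=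
  (isProperMap_iff_tendsto_cocompact.2 ⟨continuous_of_discreteTopology,
    by rwa [cocompact_eq_cofinite, Nat.cofinite_eq_atTop]⟩).isClosedMap t (isClosed_discrete t)

theorem eventually_disjoint_image_Ici_of_tendsto_cocompact (hu : Tendsto u atTop (cocompact X))
    {K : Set X} (hK : IsCompact K) : ∀ᶠ n in atTop, Disjoint (u '' Ici n) K := by
  obtain ⟨N, hN⟩ := eventually_atTop.1 (hu.eventually hK.compl_mem_cocompact)
  filter_upwards [eventually_ge_atTop N] with n hn
  exact disjoint_left.2 fun _ ⟨k, hk, hku⟩ => hku ▸ hN k (hn.trans hk)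

end CocompactSequence

section UpperConvergenceCounterexample

variable {X : Type*} [PseudoMetricSpace X] {u : ℕ → X}

theorem tendstoUpperCompactBornology_union_image_Ici (hu : Tendsto u atTop (cocompact X))
    (A : Set X) : TendstoUpperCompactBornology atTop (fun n => A ∪ u '' Ici n) A := by
  intro S₀ _ hS ε hε
  filter_upwards [eventually_disjoint_image_Ici_of_tendsto_cocompact hu hS] with n hn
  rintro y ⟨hyA | hyu, hyS⟩
  · exact self_subset_thickening hε _ hyA
  · exact absurd (subset_closure hyS) (disjoint_left.1 hn hyu)

theorem not_tendstoUpperWijsman_union_image_Ici {A : Set X} {x : X} {r : ℝ}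
    (hu : ∀ n, u n ∈ closedBall x r) (hr : r < infDist x A) :
    ¬TendstoUpperWijsman atTop (fun n => A ∪ u '' Ici n) A := fun h => by
  obtain ⟨n, hn⟩ := (h x (infDist x A - r) (by linarith)).exists
  have : infDist x (A ∪ u '' Ici n) ≤ dist x (u n) :=
    infDist_le_dist_of_mem (Or.inr ⟨n, self_mem_Ici, rfl⟩)
  linarith [dist_comm x (u n), mem_closedBall.1 (hu n)]

end UpperConvergenceCounterexample

theorem compactPlus_implies_upperWijsman_iff_niceClosedBalls
    {X : Type u} [MetricSpace X] :
    (∀ (ι : Type u) (l : Filter ι) (An : ι → Set X) (A : Set X),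
      (∀ i, IsClosed (An i)) → (∀ i, (An i).Nonempty) →
      IsClosed A → A.Nonempty →
      (∀ S₀ : Set X, S₀.Nonempty → IsCompact (closure S₀) →
        ∀ ε > 0, ∀ᶠ i in l, An i ∩ S₀ ⊆ thickening ε A) →
      (∀ x : X, ∀ ε > 0, ∀ᶠ i in l, infDist x A - infDist x (An i) < ε)) ↔
    (∀ (x : X) (r : ℝ), closedBall x r ≠ Set.univ → IsCompact (closedBall x r)) := by
  constructor
  · intro H x r hball
    by_contra hc
    obtain ⟨p, hp⟩ := (ne_univ_iff_exists_notMem _).1 hball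
    obtain ⟨u, hu_mem, hu⟩ :=
      exists_seq_mem_tendsto_cocompact_of_not_isCompact isClosed_closedBall hc
    have hr : r < infDist x {p} := by
      rw [infDist_singleton, dist_comm]
      exact not_le.1 hp
    exact not_tendstoUpperWijsman_union_image_Ici hu_mem hr fun y ε hε =>
      H (ULift ℕ) (map ULift.up atTop) (fun n => {p} ∪ u '' Ici n.down) {p}
        (fun _ => isClosed_singleton.union (isClosed_image_of_tendsto_cocompact hu _))
        (fun _ => (singleton_nonempty p).mono subset_union_left) isClosed_singleton
        (singleton_nonempty p) (tendstoUpperCompactBornology_union_image_Ici hu {p}) y ε hε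
  · intro hX ι l An A _ hAn _ hA hK
    exact HasNiceClosedBalls.tendstoUpperWijsman hX hAn hA hK
end

section
/- Let (X,d) be a metric space. A net (A_λ) of nonempty closed sets converges to a nonempty closed set A in the upper Attouch–Wets sense (for each bounded S₀ and ε > 0, eventually d(x,A) − d(x,A_λ) < ε for all x ∈ S₀) if and only if it B_d(X)⁺-converges to A (for each bounded S₀ and ε > 0, eventually A_λ ∩ S₀ ⊆ B_d(A,ε)). -/
/-!
If `x ∈ Aᵢ ∩ S₀` then `d(x, Aᵢ) = 0`, so upper Attouch–Wets convergence immediately gives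
`d(x, A) < ε`. Conversely, for `x ∈ S₀` with `d(x, Aᵢ) < d(x, A)`, a near-nearest point `b ∈ Aᵢ`
to `x` lies within `d(x, A) + ε/2` of `x`, hence in a fixed bounded enlargement of `S₀`
(as `d(x, A)` is bounded on `S₀`); there `b` is eventually `ε/2`-close to `A`, and
`d(x, A) ≤ d(b, A) + d(x, b)` gives `d(x, A) - d(x, Aᵢ) < ε`.
-/

open Metric Filter

section

variable {X : Type*} [PseudoMetricSpace X]

theorem Metric.infDist_sub_infDist_lt_of_forall_dist_lt {A B : Set X} (hB : B.Nonempty) {x : X}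
    {r ε δ : ℝ} (hε : 0 ≤ ε) (hδ : 0 < δ) (hxA : infDist x A ≤ r)
    (hclose : ∀ b ∈ B, dist x b < r + δ → infDist b A < ε) :
    infDist x A - infDist x B < ε + δ := by
  rcases le_or_gt (infDist x A) (infDist x B) with hAB | hBA
  · linarith
  obtain ⟨b, hbB, hxb⟩ := (infDist_lt_iff hB).1 (lt_add_of_pos_right (infDist x B) hδ)
  have hbA : infDist b A < ε := hclose b hbB (by linarith)
  have htriangle : infDist x A ≤ infDist b A + dist x b := infDist_le_infDist_add_dist
  linarith

theorem Metric.exists_forall_infDist_le_of_isBounded {A S : Set X} (hA : A.Nonempty)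
    (hS : Bornology.IsBounded S) : ∃ r, ∀ x ∈ S, infDist x A ≤ r := by
  obtain ⟨a, ha⟩ := hA
  obtain ⟨r, hr⟩ := (isBounded_iff_subset_closedBall a).1 hS
  exact ⟨r, fun x hx => (infDist_le_dist_of_mem ha).trans (mem_closedBall.1 (hr hx))⟩

end

theorem upperAW_iff_boundedBornPlus_general {X : Type*} [MetricSpace X]
    {ι : Type*} (l : Filter ι) (An : ι → Set X) (A : Set X)
    (hAnne : ∀ i, (An i).Nonempty)
    (hAne : A.Nonempty) :
    (∀ S₀ : Set X, Bornology.IsBounded S₀ → ∀ ε > 0, ∀ᶠ i in l, ∀ x ∈ S₀,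
        infDist x A - infDist x (An i) < ε) ↔
    (∀ S₀ : Set X, Bornology.IsBounded S₀ → ∀ ε > 0, ∀ᶠ i in l,
        An i ∩ S₀ ⊆ thickening ε A) := by
  constructor
  · intro hAW S₀ hS₀ ε hε
    filter_upwards [hAW S₀ hS₀ ε hε] with i hi x ⟨hxAn, hxS₀⟩
    rw [mem_thickening_iff_infDist_lt hAne]
    simpa [infDist_zero_of_mem hxAn] using hi x hxS₀
  · intro hBorn S₀ hS₀ ε hε
    obtain ⟨r, hr⟩ := exists_forall_infDist_le_of_isBounded hAne hS₀
    filter_upwards [hBorn _ (hS₀.thickening (δ := r + ε / 2)) (ε / 2) (half_pos hε)]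
      with i hi x hx
    have hlt := infDist_sub_infDist_lt_of_forall_dist_lt (hAnne i) (half_pos hε).le
      (half_pos hε) (hr x hx) fun b hb hxb =>
        (mem_thickening_iff_infDist_lt hAne).1 <|
          hi ⟨hb, mem_thickening_iff.2 ⟨x, hx, by rwa [dist_comm]⟩⟩
    linarith

theorem upperAW_iff_boundedBornPlus {X : Type*} [MetricSpace X]
    {ι : Type*} (l : Filter ι) (An : ι → Set X) (A : Set X)
    (hAnc : ∀ i, IsClosed (An i)) (hAnne : ∀ i, (An i).Nonempty)
    (hAc : IsClosed A) (hAne : A.Nonempty) :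
    (∀ S₀ : Set X, Bornology.IsBounded S₀ → ∀ ε > 0, ∀ᶠ i in l, ∀ x ∈ S₀,
        infDist x A - infDist x (An i) < ε) ↔
    (∀ S₀ : Set X, Bornology.IsBounded S₀ → ∀ ε > 0, ∀ᶠ i in l,
        An i ∩ S₀ ⊆ thickening ε A) :=
  upperAW_iff_boundedBornPlus_general l An A hAnne hAne
end

section
/- Let (X,d) be an almost convex metric space and S a bornology on X such that for every S₀ ∈ S and positive functions f, g with inf_{x∈S₀}(g(x) − f(x)) > 0, either B_d(S₀,f) ∈ S or B_d(S₀,g) = X. Then for every S₀ ∈ S and every positive function f : X → (0,∞), either B_d(S₀,f) ∈ S or the closure of B_d(S₀,f) is X. -/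
open Metric Filter

/-!
Take `g = f + ε`: the gap `g - f` is constantly `ε`, so if `B(S₀, f) ∉ S` the hypothesis gives
`B(S₀, f + ε) = X`. Almost convexity, `B(x, f x + ε) = B(B(x, f x), ε)`, puts `B(S₀, f + ε)`
inside the `ε`-thickening of `B(S₀, f)`. Hence every thickening of `B(S₀, f)` is `X`, so
`B(S₀, f)` is dense.
-/

open Set

theorem thickening_ball_of_almostConvex {X : Type*} [PseudoMetricSpace X]
    (hac : ∀ (A : Set X), A.Nonempty → ∀ ε r : ℝ, 0 < ε → 0 < r →
      thickening r (thickening ε A) = thickening (ε + r) A)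
    (x : X) {ε r : ℝ} (hε : 0 < ε) (hr : 0 < r) :
    thickening r (ball x ε) = ball x (ε + r) := by
  simpa only [thickening_singleton] using hac {x} (singleton_nonempty x) ε r hε hr

theorem fEnl_add_const_subset_thickening {X : Type*} [MetricSpace X] {S : Set X} {f : X → ℝ}
    {ε : ℝ}
    (hball : ∀ x ∈ S, ball x (f x + ε) ⊆ thickening ε (ball x (f x))) :
    fEnl S (fun x => f x + ε) ⊆ thickening ε (fEnl S f) := by
  refine iUnion₂_subset fun x hx => (hball x hx).trans (thickening_subset_of_subset ε ?_)
  exact subset_biUnion_of_mem (u := fun x => ball x (f x)) hx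

theorem closure_eq_univ_of_thickening_eq_univ {α : Type*} [PseudoEMetricSpace α] {s : Set α}
    (h : ∀ ε : ℝ, 0 < ε → thickening ε s = univ) : closure s = univ := by
  rw [closure_eq_iInter_thickening]
  simp only [iInter_eq_univ]
  exact h

theorem sInf_image_add_const_sub {α : Type*} {S : Set α} (hS : S.Nonempty) (f : α → ℝ)
    (ε : ℝ) : sInf ((fun x => (f x + ε) - f x) '' S) = ε := by
  simp only [add_sub_cancel_left, hS.image_const, csInf_singleton]

theorem almostConvex_enlargement_dichotomy_general {X : Type*} [MetricSpace X]
    (hac : ∀ (A : Set X), A.Nonempty → ∀ ε r : ℝ, 0 < ε → 0 < r →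
      thickening r (thickening ε A) = thickening (ε + r) A)
    (B : Set (Set X))
    (hne : ∀ s ∈ B, s.Nonempty)
    (hcond : ∀ S₀ ∈ B, ∀ f g : X → ℝ, (∀ x, 0 < f x) → (∀ x, 0 < g x) →
      0 < sInf ((fun x => g x - f x) '' S₀) →
      fEnl S₀ f ∈ B ∨ fEnl S₀ g = Set.univ) :
    ∀ S₀ ∈ B, ∀ f : X → ℝ, (∀ x, 0 < f x) →
      fEnl S₀ f ∈ B ∨ closure (fEnl S₀ f) = Set.univ := by
  intro S₀ hS₀ f hf
  by_cases hmem : fEnl S₀ f ∈ B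
  · exact Or.inl hmem
  refine Or.inr (closure_eq_univ_of_thickening_eq_univ fun ε hε => ?_)
  have hcover : fEnl S₀ (fun x => f x + ε) = univ :=
    (hcond S₀ hS₀ f _ hf (fun x => add_pos (hf x) hε)
      (by rwa [sInf_image_add_const_sub (hne S₀ hS₀)])).resolve_left hmem
  refine eq_univ_of_univ_subset (hcover ▸ fEnl_add_const_subset_thickening fun x _ => ?_)
  exact (thickening_ball_of_almostConvex hac x (hf x) hε).ge

theorem almostConvex_enlargement_dichotomy {X : Type*} [MetricSpace X]
    (hac : ∀ (A : Set X), A.Nonempty → ∀ ε r : ℝ, 0 < ε → 0 < r →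
      thickening r (thickening ε A) = thickening (ε + r) A)
    (B : Set (Set X))
    (hne : ∀ s ∈ B, s.Nonempty)
    (hcov : ∀ x : X, ∃ s ∈ B, x ∈ s)
    (hered : ∀ s ∈ B, ∀ t, t ⊆ s → t.Nonempty → t ∈ B)
    (hunion : ∀ s ∈ B, ∀ t ∈ B, s ∪ t ∈ B)
    (hcond : ∀ S₀ ∈ B, ∀ f g : X → ℝ, (∀ x, 0 < f x) → (∀ x, 0 < g x) →
      0 < sInf ((fun x => g x - f x) '' S₀) →
      fEnl S₀ f ∈ B ∨ fEnl S₀ g = Set.univ) :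
    ∀ S₀ ∈ B, ∀ f : X → ℝ, (∀ x, 0 < f x) →
      fEnl S₀ f ∈ B ∨ closure (fEnl S₀ f) = Set.univ :=
  almostConvex_enlargement_dichotomy_general hac B hne hcond
end
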